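/- Let G be a finite abelian group, let k be a positive natural number, and let S₁, …, S_k be subgroups of G with γ_i = |S_i|. Suppose S₁ = {id, s} for an element s ∈ G with s ≠ id and s·s = id. Let T be a positive natural number and set θ₁ = π/(2T) and θ_i = π·γ_i/T for i ≥ 2. For each i let A_i be the Cayley adjacency matrix of Cay(G, S_i∖{id}) over ℂ and let H_i = (2/γ_i)·A_i + ((2 − γ_i)/γ_i)·I, and define U = ∏_{i=1}^k exp(i·θ_i·H_i) (matrix exponential, i the imaginary unit). Then there exists α ∈ ℂ with |α| = 1 such that U^T = α·A₁; in particular, since (A₁)_{g,h} = 1 exactly when g = s·h, the walk U exhibits perfect state transfer between every pair of vertices h and s·h at time T. -/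

import Mathlib

/-!
Let `B_S` be the 0/1 matrix of the relation `g h⁻¹ ∈ S`. Then `A_S = B_S - 1` and
`B_S² = |S| B_S`, so `H_S = (2/|S|) B_S - 1` is an involution, and in an abelian group all the
`B_S`, hence all the `H_S`, commute. Therefore `U^T = exp (i T ∑ θ_j H_j) = ∏ exp (i T θ_j H_j)`,
and for an involution `exp (i t H) = cos t + i sin t H`. Since `T θ_j = γ_j π` for `j ≥ 2`, those
factors are the scalars `(-1)^γ_j`, while `T θ_1 = π/2` and `|S₁| = 2` turn the first factor
into `i H₁ = i A₁`.
-/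

open scoped Classical

/-- The Cayley adjacency matrix of `Cay(G, S \ {id})`: entry `(g, h)` is `1` if
`g * h⁻¹ ∈ S` and `g ≠ h`, and `0` otherwise. -/
noncomputable def cayleyAdj {G : Type*} [Group G] (S : Subgroup G) : Matrix G G ℂ :=
  Matrix.of fun g h => if g * h⁻¹ ∈ S ∧ g ≠ h then (1 : ℂ) else 0

open Complex NormedSpace

section RightCosetMatrix

variable {G : Type*} [Group G]

noncomputable def rightCosetMatrix (S : Subgroup G) : Matrix G G ℂ :=
  Matrix.of fun g h => if g * h⁻¹ ∈ S then 1 else 0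

theorem cayleyAdj_eq_rightCosetMatrix_sub_one (S : Subgroup G) :
    cayleyAdj S = rightCosetMatrix S - 1 := by
  ext g h
  by_cases hgh : g = h
  · simp [cayleyAdj, rightCosetMatrix, hgh, S.one_mem]
  · simp [cayleyAdj, rightCosetMatrix, hgh, Matrix.one_apply_ne hgh]

theorem cayleyAdj_mul_left_apply {S : Subgroup G} {s : G} (hs : s ∈ S) (hs1 : s ≠ 1) (h : G) :
    cayleyAdj S (s * h) h = 1 := by
  simp [cayleyAdj, hs, hs1]

variable [Fintype G]

theorem card_filter_mul_inv_mem (S : Subgroup G) (g : G) :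
    (Finset.univ.filter fun x => g * x⁻¹ ∈ S).card = Nat.card S := by
  rw [← Fintype.card_subtype, Nat.card_eq_fintype_card]
  exact Fintype.card_congr (((Equiv.inv G).trans (Equiv.mulLeft g)).subtypeEquiv fun _ => Iff.rfl)

theorem rightCosetMatrix_mul_self (S : Subgroup G) :
    rightCosetMatrix S * rightCosetMatrix S = (Nat.card S : ℂ) • rightCosetMatrix S := by
  ext g h
  have hmem : ∀ x, (g * x⁻¹ ∈ S ∧ x * h⁻¹ ∈ S) ↔ (g * x⁻¹ ∈ S ∧ g * h⁻¹ ∈ S) := fun x =>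
    and_congr_right fun hx => by rw [← S.mul_mem_cancel_left hx, mul_assoc, inv_mul_cancel_left]
  simp only [Matrix.mul_apply, Matrix.smul_apply, rightCosetMatrix, Matrix.of_apply,
    ite_zero_mul_ite_zero, mul_one, hmem]
  by_cases hgh : g * h⁻¹ ∈ S <;> simp [hgh, Finset.sum_boole, card_filter_mul_inv_mem]

end RightCosetMatrix

theorem rightCosetMatrix_commute {G : Type*} [CommGroup G] [Fintype G] (S S' : Subgroup G) :
    Commute (rightCosetMatrix S) (rightCosetMatrix S') := by
  ext g h
  simp only [Matrix.mul_apply, rightCosetMatrix, Matrix.of_apply]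
  refine Fintype.sum_equiv ((Equiv.inv G).trans (Equiv.mulLeft (g * h))) _ _ fun x => ?_
  have hleft : g * (g * h * x⁻¹)⁻¹ = x * h⁻¹ := by
    rw [mul_inv_rev, mul_inv_rev, inv_inv, mul_left_comm, mul_comm h⁻¹, mul_inv_cancel_left]
  have hright : g * h * x⁻¹ * h⁻¹ = g * x⁻¹ := by rw [mul_right_comm, mul_inv_cancel_right]
  simp only [Equiv.trans_apply, Equiv.inv_apply, Equiv.coe_mulLeft, hleft, hright, mul_comm]

theorem two_div_smul_sub_one_mul_self {K A : Type*} [Field K] [Ring A] [Algebra K A] {B : A}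
    {c : K} (hc : c ≠ 0) (hB : B * B = c • B) :
    ((2 / c) • B - 1) * ((2 / c) • B - 1) = 1 := by
  have hscalar : 2 / c * (2 / c) * c = 2 * (2 / c) := by field_simp
  simp only [sub_mul, mul_sub, smul_mul_smul_comm, hB, smul_smul, mul_one, one_mul, hscalar]
  module

section StaggeredHamiltonian

variable {G : Type*} [Group G]

noncomputable def staggeredHamiltonian (S : Subgroup G) : Matrix G G ℂ :=
  ((2 : ℂ) / Nat.card S) • cayleyAdj S + (((2 : ℂ) - Nat.card S) / Nat.card S) • 1

theorem staggeredHamiltonian_of_card_eq_two {S : Subgroup G} (hS : Nat.card S = 2) :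
    staggeredHamiltonian S = cayleyAdj S := by
  simp [staggeredHamiltonian, hS]

variable [Fintype G]

theorem staggeredHamiltonian_eq (S : Subgroup G) :
    staggeredHamiltonian S = ((2 : ℂ) / Nat.card S) • rightCosetMatrix S - 1 := by
  have hS : (Nat.card S : ℂ) ≠ 0 := Nat.cast_ne_zero.mpr Nat.card_pos.ne'
  rw [staggeredHamiltonian, cayleyAdj_eq_rightCosetMatrix_sub_one, sub_div, div_self hS]
  module

theorem staggeredHamiltonian_mul_self (S : Subgroup G) :
    staggeredHamiltonian S * staggeredHamiltonian S = 1 := by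
  rw [staggeredHamiltonian_eq]
  exact two_div_smul_sub_one_mul_self (Nat.cast_ne_zero.mpr Nat.card_pos.ne')
    (rightCosetMatrix_mul_self S)

theorem staggeredHamiltonian_commute {G : Type*} [CommGroup G] [Fintype G] (S S' : Subgroup G) :
    Commute (staggeredHamiltonian S) (staggeredHamiltonian S') := by
  rw [staggeredHamiltonian_eq, staggeredHamiltonian_eq]
  exact (((rightCosetMatrix_commute S S').smul_left _).smul_right _).sub_left (.one_left _)
    |>.sub_right (.one_right _)

end StaggeredHamiltonian

section Exponential

variable {𝔸 : Type*} [Ring 𝔸] [Algebra ℂ 𝔸] [TopologicalSpace 𝔸] [IsTopologicalRing 𝔸]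
  [ContinuousSMul ℂ 𝔸] [T2Space 𝔸] {M : 𝔸}

theorem exp_I_mul_smul_of_mul_self_eq_one (hM : M * M = 1) (t : ℂ) :
    exp ((I * t) • M) = cos t • (1 : 𝔸) + (I * sin t) • M := by
  have hpow_even : ∀ n : ℕ, M ^ (2 * n) = 1 := fun n => by rw [pow_mul, sq, hM, one_pow]
  rw [exp_eq_tsum ℂ]
  refine HasSum.tsum_eq (HasSum.even_add_odd ?_ ?_)
  · convert (hasSum_cos t).smul_const (1 : 𝔸) using 2 with n
    rw [smul_pow, hpow_even, smul_smul, pow_mul, mul_pow, I_sq]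
    congr 1
    rw [mul_pow, ← pow_mul]
    ring
  · convert ((hasSum_sin t).mul_left I).smul_const M using 2 with n
    rw [smul_pow, pow_succ M, hpow_even, one_mul, smul_smul, pow_succ, pow_mul, mul_pow, I_sq]
    congr 1
    rw [mul_pow, ← pow_mul, pow_succ t]
    ring

theorem exp_I_mul_pi_div_two_smul (hM : M * M = 1) : exp ((I * (Real.pi / 2 : ℂ)) • M) = I • M := by
  simp [exp_I_mul_smul_of_mul_self_eq_one hM]

theorem exp_I_mul_nat_mul_pi_smul (hM : M * M = 1) (n : ℕ) :
    exp ((I * (n * Real.pi : ℂ)) • M) = (-1 : ℂ) ^ n • (1 : 𝔸) := by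
  have hcos : cos (n * Real.pi) = (-1) ^ n := by exact_mod_cast Real.cos_nat_mul_pi n
  simp [exp_I_mul_smul_of_mul_self_eq_one hM, hcos, sin_nat_mul_pi]

end Exponential

theorem Matrix.exp_sum_eq_prod_ofFn {m 𝔸 : Type*} [Fintype m] [DecidableEq m] [NormedRing 𝔸]
    [NormedAlgebra ℚ 𝔸] [CompleteSpace 𝔸] {n : ℕ} (f : Fin n → Matrix m m 𝔸)
    (hf : ∀ i j, Commute (f i) (f j)) :
    exp (∑ i, f i) = (List.ofFn fun i => exp (f i)).prod := by
  induction n with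
  | zero => simp
  | succ n ih =>
    rw [Fin.sum_univ_succ, List.ofFn_succ, List.prod_cons, Matrix.exp_add_of_commute
      _ _ (Commute.sum_right _ _ _ fun i _ => hf 0 i.succ), ih _ fun i j => hf i.succ j.succ]

theorem Matrix.prod_ofFn_exp_pow {m 𝔸 : Type*} [Fintype m] [DecidableEq m] [NormedRing 𝔸]
    [NormedAlgebra ℚ 𝔸] [CompleteSpace 𝔸] {n : ℕ} (f : Fin n → Matrix m m 𝔸)
    (hf : ∀ i j, Commute (f i) (f j)) (T : ℕ) :
    (List.ofFn fun i => exp (f i)).prod ^ T = (List.ofFn fun i => exp (T • f i)).prod := by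
  rw [← exp_sum_eq_prod_ofFn f hf, ← Matrix.exp_nsmul, Finset.smul_sum,
    exp_sum_eq_prod_ofFn _ fun i j => ((hf i j).smul_left T).smul_right T]

theorem List.prod_ofFn_smul_one {R A : Type*} [CommSemiring R] [Semiring A] [Algebra R A] {n : ℕ}
    (c : Fin n → R) : (List.ofFn fun i => c i • (1 : A)).prod = (∏ i, c i) • 1 := by
  simp only [← Algebra.algebraMap_eq_smul_one, ← List.prod_ofFn, map_list_prod, List.map_ofFn]
  rfl

theorem staggered_cayley_perfect_state_transfer_general
    {G : Type*} [CommGroup G] [Fintype G]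
    (k : ℕ) (hk : 0 < k) (S : Fin k → Subgroup G)
    (γ : Fin k → ℕ) (hγ : ∀ i, γ i = Nat.card (S i))
    (s : G) (hs : s ≠ 1)
    (hS1 : (S ⟨0, hk⟩ : Set G) = {1, s})
    (T : ℕ) (hT : 0 < T)
    (θ : Fin k → ℝ)
    (hθ0 : θ ⟨0, hk⟩ = Real.pi / (2 * T))
    (hθ : ∀ i : Fin k, i ≠ ⟨0, hk⟩ → θ i = Real.pi * (γ i : ℝ) / T)
    (A : Fin k → Matrix G G ℂ) (hA : ∀ i, A i = cayleyAdj (S i))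
    (H : Fin k → Matrix G G ℂ)
    (hH : ∀ i, H i = ((2 : ℂ) / (γ i : ℂ)) • A i
        + (((2 : ℂ) - (γ i : ℂ)) / (γ i : ℂ)) • (1 : Matrix G G ℂ))
    (U : Matrix G G ℂ)
    (hU : U = (List.ofFn fun i => NormedSpace.exp ((Complex.I * (θ i : ℂ)) • H i)).prod) :
    (∃ α : ℂ, ‖α‖ = 1 ∧ U ^ T = α • A ⟨0, hk⟩) ∧
      ∀ h : G, ‖(U ^ T) (s * h) h‖ = 1 := by
  obtain ⟨k, rfl⟩ := Nat.exists_eq_add_one_of_ne_zero hk.ne'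
  obtain rfl : γ = fun i => Nat.card (S i) := funext hγ
  obtain rfl : H = fun i => staggeredHamiltonian (S i) := funext fun i => by rw [hH, hA]; rfl
  obtain rfl : A = fun i => cayleyAdj (S i) := funext hA
  change (S 0 : Set G) = {1, s} at hS1
  have hT' : (T : ℂ) ≠ 0 := by exact_mod_cast hT.ne'
  have hfirst : exp (((T : ℂ) * (I * θ 0)) • staggeredHamiltonian (S 0)) = I • cayleyAdj (S 0) := by
    have hcard : Nat.card (S 0) = 2 := by
      rw [← SetLike.coe_sort_coe, Nat.card_coe_set_eq, hS1, Set.ncard_pair hs.symm]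
    have hangle : (T : ℂ) * (I * θ 0) = I * (Real.pi / 2 : ℂ) := by
      rw [show θ 0 = _ from hθ0]; push_cast; field_simp
    rw [hangle, exp_I_mul_pi_div_two_smul (staggeredHamiltonian_mul_self _),
      staggeredHamiltonian_of_card_eq_two hcard]
  have hrest (i : Fin k) : exp (((T : ℂ) * (I * θ i.succ)) • staggeredHamiltonian (S i.succ)) =
      (-1 : ℂ) ^ Nat.card (S i.succ) • 1 := by
    have hangle : (T : ℂ) * (I * θ i.succ) = I * (Nat.card (S i.succ) * Real.pi : ℂ) := by
      rw [hθ _ (Fin.succ_ne_zero i)]; push_cast; field_simp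
    rw [hangle, exp_I_mul_nat_mul_pi_smul (staggeredHamiltonian_mul_self _)]
  set α := I * ∏ i : Fin k, (-1 : ℂ) ^ Nat.card (S i.succ)
  have hα : ‖α‖ = 1 := by simp [α]
  have hUα : U ^ T = α • cayleyAdj (S 0) := by
    rw [hU, Matrix.prod_ofFn_exp_pow _
      fun i j => ((staggeredHamiltonian_commute _ _).smul_left _).smul_right _]
    simp only [← Nat.cast_smul_eq_nsmul ℂ, smul_smul, List.ofFn_succ, List.prod_cons, hfirst,
      hrest, List.prod_ofFn_smul_one, smul_mul_smul_comm, mul_one, α]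
  refine ⟨⟨α, hα, hUα⟩, fun h => ?_⟩
  have hsS : s ∈ S 0 := by rw [← SetLike.mem_coe, hS1]; exact Set.mem_insert_of_mem _ rfl
  rw [hUα, Matrix.smul_apply, cayleyAdj_mul_left_apply hsS hs, smul_eq_mul, mul_one, hα]

theorem staggered_cayley_perfect_state_transfer
    {G : Type*} [CommGroup G] [Fintype G]
    (k : ℕ) (hk : 0 < k) (S : Fin k → Subgroup G)
    (γ : Fin k → ℕ) (hγ : ∀ i, γ i = Nat.card (S i))
    (s : G) (hs : s ≠ 1) (hs2 : s * s = 1)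
    (hS1 : (S ⟨0, hk⟩ : Set G) = {1, s})
    (T : ℕ) (hT : 0 < T)
    (θ : Fin k → ℝ)
    (hθ0 : θ ⟨0, hk⟩ = Real.pi / (2 * T))
    (hθ : ∀ i : Fin k, i ≠ ⟨0, hk⟩ → θ i = Real.pi * (γ i : ℝ) / T)
    (A : Fin k → Matrix G G ℂ) (hA : ∀ i, A i = cayleyAdj (S i))
    (H : Fin k → Matrix G G ℂ)
    (hH : ∀ i, H i = ((2 : ℂ) / (γ i : ℂ)) • A i
        + (((2 : ℂ) - (γ i : ℂ)) / (γ i : ℂ)) • (1 : Matrix G G ℂ))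
    (U : Matrix G G ℂ)
    (hU : U = (List.ofFn fun i => NormedSpace.exp ((Complex.I * (θ i : ℂ)) • H i)).prod) :
    (∃ α : ℂ, ‖α‖ = 1 ∧ U ^ T = α • A ⟨0, hk⟩) ∧
      ∀ h : G, ‖(U ^ T) (s * h) h‖ = 1 :=
  staggered_cayley_perfect_state_transfer_general k hk S γ hγ s hs hS1 T hT θ hθ0 hθ A hA H hH U hU
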